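/- Let K be a field, let d ≥ 2 and n ≥ 2 be integers, let A = K[x_1,…,x_n], and let A_0 be the Veronese subalgebra of A of degree d. If β is a d-graded K-algebra automorphism of A whose restriction to A_0 is the identity map, then there exists λ ∈ K with λ^d = 1 such that β(x_i) = λ x_i for all i = 1,…,n. -/

import Mathlib

set_option synthInstance.maxHeartbeats 1000000
set_option maxHeartbeats 1000000

open MvPolynomial

/-- Total degree of a monomial exponent vector. -/
def mdeg {n : ℕ} (m : Fin n →₀ ℕ) : ℕ := m.sum fun _ k => k

lemma mdeg_add {n : ℕ} (a b : Fin n →₀ ℕ) : mdeg (a + b) = mdeg a + mdeg b :=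
  Finsupp.sum_add_index' (fun _ => rfl) (fun _ _ _ => rfl)

/-- The `i`-th component `A_i` of the `ℤ/d`-grading of `K[x_1,…,x_n]`:
polynomials all of whose monomials have total degree ≡ i (mod d). -/
def comp (K : Type) [Field K] (n d i : ℕ) : Submodule K (MvPolynomial (Fin n) K) where
  carrier := {f | ∀ m ∈ f.support, mdeg m % d = i % d}
  add_mem' := by
    intro f g hf hg m hm
    rcases Finset.mem_union.mp (MvPolynomial.support_add hm) with h | h
    · exact hf m h
    · exact hg m h
  zero_mem' := by intro m hm; simp at hm
  smul_mem' := by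
    intro c f hf m hm
    exact hf m (Finsupp.support_smul hm)

/-- The Veronese subalgebra `A_0` of degree `d`. -/
noncomputable def veronese (K : Type) [Field K] (n d : ℕ) : Subalgebra K (MvPolynomial (Fin n) K) :=
  (comp K n d 0).toSubalgebra
    (by
      classical
      intro m hm
      rw [show (1 : MvPolynomial (Fin n) K) = MvPolynomial.monomial 0 1 from rfl,
        MvPolynomial.support_monomial] at hm
      simp only [one_ne_zero, if_false, Finset.mem_singleton] at hm
      subst hm
      simp [mdeg])
    (by
      intro f g hf hg m hm
      obtain ⟨a, ha, b, hb, rfl⟩ := Finset.mem_add.mp (MvPolynomial.support_mul _ _ hm)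
      rw [mdeg_add, Nat.add_mod, hf a ha, hg b hb]
      simp)

lemma X_pow_mem (K : Type) [Field K] (n d : ℕ) (i : Fin n) :
    (MvPolynomial.X i : MvPolynomial (Fin n) K) ^ d ∈ veronese K n d := by
  classical
  intro m hm
  rw [MvPolynomial.X_pow_eq_monomial, MvPolynomial.support_monomial] at hm
  simp only [one_ne_zero, if_false, Finset.mem_singleton] at hm
  subst hm
  simp [mdeg, Finsupp.sum_single_index, Nat.mod_self]

/-!
Since `β` fixes `x_i^d ∈ A₀`, we get `β(x_i)^d = x_i^d`. As `x_i` is prime it divides `β(x_i)`,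
and the cofactor is a `d`-th root of unity in `A`, hence a constant: `β(x_i) = λ_i x_i` with
`λ_i^d = 1`. Finally `β` fixes `x_i x_j^(d-1) ∈ A₀`, which gives `λ_i λ_j^(d-1) = 1 = λ_j^d`,
so all the `λ_i` coincide.
-/

namespace MvPolynomial

variable {σ R : Type*} [CommRing R] [IsDomain R]

theorem exists_eq_C_mul_X_of_pow_eq_X_pow {f : MvPolynomial σ R} {i : σ} {d : ℕ} (hd : d ≠ 0)
    (h : f ^ d = X i ^ d) : ∃ c : R, c ^ d = 1 ∧ f = C c * X i := by
  obtain ⟨g, rfl⟩ : X i ∣ f := X_prime.dvd_of_dvd_pow (by rw [h]; exact dvd_pow_self _ hd)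
  have hg : g ^ d = 1 := by
    refine mul_left_cancel₀ (pow_ne_zero d (X_ne_zero i)) ?_
    rw [← mul_pow, h, mul_one]
  obtain ⟨c, -, rfl⟩ := isUnit_iff_eq_C_of_isReduced.mp (IsUnit.of_pow_eq_one hg hd)
  exact ⟨c, C_injective σ R (by rw [map_pow, hg, map_one]), mul_comm _ _⟩

theorem eq_of_C_mul_X_mul_pow_eq {i j : σ} {a b : R} {k : ℕ} (hb : b ^ (k + 1) = 1)
    (h : C a * X i * (C b * X j) ^ k = X i * X j ^ k) : a = b := by
  have hM : (X i * X j ^ k : MvPolynomial σ R) ≠ 0 :=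
    mul_ne_zero (X_ne_zero i) (pow_ne_zero k (X_ne_zero j))
  have hab : a * b ^ k = 1 := by
    refine C_injective σ R (mul_right_cancel₀ hM ?_)
    rw [map_one, one_mul, map_mul, map_pow]
    linear_combination h
  calc a = a * b ^ (k + 1) := by rw [hb, mul_one]
    _ = a * b ^ k * b := by ring
    _ = b := by rw [hab, one_mul]

end MvPolynomial

lemma mdeg_single {n : ℕ} (i : Fin n) (k : ℕ) : mdeg (Finsupp.single i k) = k :=
  Finsupp.sum_single_index rfl

lemma monomial_mem_veronese {K : Type} [Field K] {n d : ℕ} {s : Fin n →₀ ℕ}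
    (hs : d ∣ mdeg s) (a : K) : monomial s a ∈ veronese K n d := by
  classical
  intro m hm
  rw [Finset.mem_singleton.mp (support_monomial_subset hm), Nat.zero_mod]
  exact Nat.mod_eq_zero_of_dvd hs

lemma X_mul_X_pow_mem_veronese (K : Type) [Field K] {n : ℕ} (k : ℕ) (i j : Fin n) :
    (X i * X j ^ k : MvPolynomial (Fin n) K) ∈ veronese K n (k + 1) := by
  rw [X_pow_eq_monomial, X, monomial_mul, one_mul]
  refine monomial_mem_veronese ?_ 1
  rw [mdeg_add, mdeg_single, mdeg_single, add_comm]

theorem stmt4_general (K : Type) [Field K] (n d : ℕ) (hd : 2 ≤ d)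
    (β : MvPolynomial (Fin n) K ≃ₐ[K] MvPolynomial (Fin n) K)
    (hid : ∀ a ∈ veronese K n d, β a = a) :
    ∃ lam : K, lam ^ d = 1 ∧
      ∀ i : Fin n, β (MvPolynomial.X i) = MvPolynomial.C lam * MvPolynomial.X i := by
  obtain ⟨k, rfl⟩ : ∃ k, d = k + 1 := ⟨d - 1, by omega⟩
  have hscalar (i : Fin n) : ∃ c : K, c ^ (k + 1) = 1 ∧ β (X i) = C c * X i :=
    exists_eq_C_mul_X_of_pow_eq_X_pow k.succ_ne_zero
      (by rw [← map_pow, hid _ (X_pow_mem K n _ i)])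
  choose c hc_pow hc using hscalar
  rcases isEmpty_or_nonempty (Fin n) with hempty | ⟨⟨j⟩⟩
  · exact ⟨1, one_pow _, isEmptyElim⟩
  refine ⟨c j, hc_pow j, fun i => ?_⟩
  have hfix := hid _ (X_mul_X_pow_mem_veronese K k i j)
  rw [map_mul, map_pow, hc i, hc j] at hfix
  rw [hc i, eq_of_C_mul_X_mul_pow_eq (hc_pow j) hfix]

/-- a `d`-graded automorphism of `A = K[x₁,…,xₙ]` restricting to the identity
on the Veronese subalgebra `A₀` is of the form `xᵢ ↦ λxᵢ` with `λ^d = 1`. -/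
theorem stmt4 (K : Type) [Field K] (n d : ℕ) (hn : 2 ≤ n) (hd : 2 ≤ d)
    (β : MvPolynomial (Fin n) K ≃ₐ[K] MvPolynomial (Fin n) K)
    (hgr : ∀ i : Fin n, β (MvPolynomial.X i) ∈ comp K n d 1)
    (hid : ∀ a ∈ veronese K n d, β a = a) :
    ∃ lam : K, lam ^ d = 1 ∧
      ∀ i : Fin n, β (MvPolynomial.X i) = MvPolynomial.C lam * MvPolynomial.X i :=
  stmt4_general K n d hd β hid
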